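/- If the base samples ε¹, ε², … are i.i.d. standard Gaussian N(0, I_q) vectors, then (1) α̂_N* → α* almost surely as N → ∞, and (2) dist(x̂_N, 𝒳*) → 0 almost surely as N → ∞. -/

import Mathlib

/-!
For fixed `ε`, the integrand `A x ε` is Lipschitz in `x ∈ K` with constant `C (1 + ‖ε‖)`, which is
integrable under the Gaussian. Along almost every sample path, the strong law of large numbers
therefore makes the sample averages `α̂_N` converge to `α` on a countable dense subset of `K`, and
makes them equi-Lipschitz on `K`, their Lipschitz constants being sample averages of
`C (1 + ‖ε‖)`. Equicontinuity upgrades this to uniform convergence on `K`, and uniform convergence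
on a compact set carries the maximal values and the maximizers along.
-/

open MeasureTheory ProbabilityTheory Filter Topology

/-- The standard Gaussian measure `N(0, I_q)` on `ℝ^q`, as the pushforward of the product of
`q` standard one-dimensional Gaussians under the identification `(Fin q → ℝ) ≃ ℝ^q`. -/
noncomputable def stdGaussian (q : ℕ) : Measure (EuclideanSpace ℝ (Fin q)) :=
  (Measure.pi fun _ : Fin q => gaussianReal 0 1).map
    (MeasurableEquiv.toLp 2 (Fin q → ℝ))

open scoped NNReal Uniformity

theorem EquicontinuousOn.tendstoUniformlyOn_of_dense {ι X α : Type*} [TopologicalSpace X]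
    [UniformSpace α] {l : Filter ι} {F : ι → X → α} {f : X → α} {K D : Set X}
    (hF : EquicontinuousOn F K) (hK : IsCompact K) (hf : ContinuousOn f K) (hDK : D ⊆ K)
    (hKD : K ⊆ closure D) (hD : ∀ x ∈ D, Tendsto (F · x) l (𝓝 (f x))) :
    TendstoUniformlyOn F f l K := by
  have : CompactSpace K := isCompact_iff_compactSpace.mp hK
  have hFK := (equicontinuous_restrict_iff F).mpr hF
  rw [tendstoUniformlyOn_iff_tendstoUniformly_comp_coe]
  refine UniformFun.tendsto_iff_tendstoUniformly.mp
    ((hFK.tendsto_uniformFun_iff_pi l (K.domRestrict f)).mpr (tendsto_pi_nhds.mpr fun x => ?_))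
  refine (hFK x).tendsto_of_mem_closure (s := ((↑) : K → X) ⁻¹' D)
    (hf.domRestrict.continuousAt.mono_left nhdsWithin_le_nhds) (fun y hy => hD y hy) ?_
  rw [closure_subtype, Subtype.image_preimage_coe, Set.inter_eq_right.mpr hDK]
  exact hKD x.2


section Argmax

variable {ι X : Type*} {l : Filter ι} {f : X → ℝ} {K : Set X} {x : ι → X} {x₀ : X}

theorem TendstoUniformlyOn.tendsto_apply_isMaxOn {F : ι → X → ℝ}
    (hF : TendstoUniformlyOn F f l K) (hxK : ∀ n, x n ∈ K) (hx : ∀ n, IsMaxOn (F n) K (x n))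
    (hx₀K : x₀ ∈ K) (hx₀ : IsMaxOn f K x₀) :
    Tendsto (fun n => F n (x n)) l (𝓝 (f x₀)) := by
  refine Metric.tendsto_nhds.mpr fun δ hδ => ?_
  filter_upwards [Metric.tendstoUniformlyOn_iff.mp hF δ hδ] with n hn
  have h₁ := hn x₀ hx₀K
  have h₂ := hn (x n) (hxK n)
  have h₃ : F n x₀ ≤ F n (x n) := hx n hx₀K
  have h₄ : f (x n) ≤ f x₀ := hx₀ (hxK n)
  rw [Real.dist_eq, abs_lt] at *
  constructor <;> linarith

theorem TendstoUniformlyOn.tendsto_comp_isMaxOn {F : ι → X → ℝ}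
    (hF : TendstoUniformlyOn F f l K) (hxK : ∀ n, x n ∈ K) (hx : ∀ n, IsMaxOn (F n) K (x n))
    (hx₀K : x₀ ∈ K) (hx₀ : IsMaxOn f K x₀) :
    Tendsto (fun n => f (x n)) l (𝓝 (f x₀)) := by
  have hclose : Tendsto (fun n => (f (x n), F n (x n))) l (𝓤 ℝ) :=
    fun u hu => (hF u hu).mono fun n hn => hn (x n) (hxK n)
  exact (Uniform.tendsto_congr hclose).mpr (hF.tendsto_apply_isMaxOn hxK hx hx₀K hx₀)

theorem tendsto_infDist_setOf_isMaxOn [PseudoMetricSpace X] (hK : IsCompact K)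
    (hf : ContinuousOn f K) (hxK : ∀ n, x n ∈ K) (hx₀ : IsMaxOn f K x₀)
    (hfx : Tendsto (fun n => f (x n)) l (𝓝 (f x₀))) :
    Tendsto (fun n => Metric.infDist (x n) {y ∈ K | ∀ z ∈ K, f z ≤ f y}) l (𝓝 0) := by
  set S := {y ∈ K | ∀ z ∈ K, f z ≤ f y}
  refine tendsto_order.2 ⟨fun a ha => Eventually.of_forall fun n =>
    ha.trans_le Metric.infDist_nonneg, fun η hη => ?_⟩
  set T := {y ∈ K | η ≤ Metric.infDist y S}
  rcases T.eq_empty_or_nonempty with hTe | hTne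
  · exact Eventually.of_forall fun n => not_le.1 fun h => hTe.subset ⟨hxK n, h⟩
  have hT : IsCompact T :=
    hK.inter_right (isClosed_le continuous_const (Metric.continuous_infDist_pt S))
  obtain ⟨t, htT, htmax⟩ := hT.exists_isMaxOn hTne (hf.mono Set.inter_subset_left)
  -- away from the argmax, `f` stays below its maximum by a positive gap
  have hlt : f t < f x₀ := by
    refine (hx₀ htT.1).lt_of_ne fun heq => ?_
    have htS : t ∈ S := ⟨htT.1, fun z hz => heq ▸ hx₀ hz⟩
    exact (Metric.infDist_zero_of_mem htS ▸ htT.2).not_gt hη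
  filter_upwards [hfx.eventually (lt_mem_nhds hlt)] with n hn
  exact not_le.1 fun h => (htmax ⟨hxK n, h⟩).not_gt hn

end Argmax

lemma LipschitzOnWith.clm_apply {X E F : Type*} [PseudoMetricSpace X] [NormedAddCommGroup E]
    [NormedAddCommGroup F] [NormedSpace ℝ E] [NormedSpace ℝ F] {K : Set X} {Λ : X → E →L[ℝ] F}
    {L : ℝ≥0} (hΛ : LipschitzOnWith L Λ K) (e : E) :
    LipschitzOnWith (L * ‖e‖₊) (fun x => Λ x e) K := by
  refine LipschitzOnWith.of_dist_le_mul fun x hx y hy => ?_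
  calc dist (Λ x e) (Λ y e) = ‖(Λ x - Λ y) e‖ := by rw [dist_eq_norm, sub_apply]
    _ ≤ ‖Λ x - Λ y‖ * ‖e‖ := (Λ x - Λ y).le_opNorm e
    _ ≤ L * dist x y * ‖e‖ := by
        rw [← dist_eq_norm]
        gcongr
        exact hΛ.dist_le_mul x hx y hy
    _ = ↑(L * ‖e‖₊) * dist x y := by push_cast; ring

lemma LipschitzWith.integrable_of_integrable_norm {E : Type*} [NormedAddCommGroup E]
    [MeasurableSpace E] [OpensMeasurableSpace E] {ν : Measure E} [IsFiniteMeasure ν]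
    {f : E → ℝ} {L : ℝ≥0} (hf : LipschitzWith L f) (hν : Integrable (‖·‖) ν) :
    Integrable f ν := by
  refine ((integrable_const ‖f 0‖).add (hν.const_mul L)).mono'
    hf.continuous.aestronglyMeasurable (Eventually.of_forall fun e => ?_)
  have hlip := hf.dist_le_mul e 0
  rw [dist_zero_right, dist_eq_norm] at hlip
  exact (norm_le_norm_add_norm_sub' (f e) (f 0)).trans (add_le_add_right hlip _)

noncomputable def sampleMean {E : Type*} (f : E → ℝ) (e : ℕ → E) (N : ℕ) : ℝ :=
  (N : ℝ)⁻¹ * ∑ i ∈ Finset.range N, f (e i)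

section SampleMean

variable {E X : Type*}

lemma dist_sampleMean_le (f g : E → ℝ) (e : ℕ → E) (N : ℕ) :
    dist (sampleMean f e N) (sampleMean g e N) ≤ sampleMean (fun y => dist (f y) (g y)) e N := by
  rw [sampleMean, sampleMean, sampleMean, Real.dist_eq, ← mul_sub, ← Finset.sum_sub_distrib,
    abs_mul, abs_of_nonneg (by positivity)]
  exact mul_le_mul_of_nonneg_left (Finset.abs_sum_le_sum_abs _ _) (by positivity)

lemma sampleMean_mul_const (f : E → ℝ) (c : ℝ) (e : ℕ → E) (N : ℕ) :
    sampleMean (fun y => f y * c) e N = sampleMean f e N * c := by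
  simp only [sampleMean, ← Finset.sum_mul, mul_assoc]

lemma sampleMean_mono {f g : E → ℝ} (hfg : ∀ y, f y ≤ g y) (e : ℕ → E) (N : ℕ) :
    sampleMean f e N ≤ sampleMean g e N :=
  mul_le_mul_of_nonneg_left (Finset.sum_le_sum fun i _ => hfg (e i)) (by positivity)

lemma lipschitzOnWith_sampleMean [PseudoMetricSpace X] {K : Set X} {F : X → E → ℝ} {ℓ : E → ℝ≥0}
    (hF : ∀ y, LipschitzOnWith (ℓ y) (F · y) K) (e : ℕ → E) (N : ℕ) {B : ℝ}
    (hB : sampleMean (fun y => (ℓ y : ℝ)) e N ≤ B) :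
    LipschitzOnWith B.toNNReal (fun x => sampleMean (F x) e N) K := by
  refine LipschitzOnWith.of_dist_le' fun x hx x' hx' => ?_
  calc dist (sampleMean (F x) e N) (sampleMean (F x') e N)
      ≤ sampleMean (fun y => ℓ y * dist x x') e N :=
        (dist_sampleMean_le _ _ e N).trans
          (sampleMean_mono (fun y => (hF y).dist_le_mul x hx x' hx') e N)
    _ ≤ B * dist x x' := by
        rw [sampleMean_mul_const]
        exact mul_le_mul_of_nonneg_right hB dist_nonneg

variable {Ω : Type*} [MeasurableSpace Ω] [MeasurableSpace E] {P : Measure Ω} {ν : Measure E}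
  {ε : ℕ → Ω → E}

theorem ae_tendsto_sampleMean (hε : ∀ i, AEMeasurable (ε i) P)
    (hindep : Pairwise fun i j => IndepFun (ε i) (ε j) P) (hlaw : ∀ i, P.map (ε i) = ν)
    {f : E → ℝ} (hf : Measurable f) (hfi : Integrable f ν) :
    ∀ᵐ ω ∂P, Tendsto (sampleMean f (ε · ω)) atTop (𝓝 (∫ y, f y ∂ν)) := by
  have hident : ∀ i, IdentDistrib (f ∘ ε i) (f ∘ ε 0) P P := fun i =>
    (IdentDistrib.mk (hε i) (hε 0) (by rw [hlaw i, hlaw 0])).comp hf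
  have hint : Integrable (f ∘ ε 0) P := by
    rwa [← integrable_map_measure (hlaw 0 ▸ hf.aestronglyMeasurable) (hε 0), hlaw 0]
  have hmean : ∫ ω, f (ε 0 ω) ∂P = ∫ y, f y ∂ν := by
    rw [← hlaw 0, integral_map (hε 0) (hlaw 0 ▸ hf.aestronglyMeasurable)]
  have := strong_law_ae (fun i => f ∘ ε i) hint (fun i j hij => (hindep hij).comp hf hf) hident
  simp only [Function.comp_apply, smul_eq_mul, hmean] at this
  exact this

lemma lipschitzOnWith_integral [PseudoMetricSpace X] {K : Set X} {F : X → E → ℝ} {ℓ : E → ℝ≥0}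
    (hF : ∀ y, LipschitzOnWith (ℓ y) (F · y) K) (hFi : ∀ x ∈ K, Integrable (F x) ν)
    (hℓ : Integrable (fun y => (ℓ y : ℝ)) ν) :
    LipschitzOnWith (∫ y, (ℓ y : ℝ) ∂ν).toNNReal (fun x => ∫ y, F x y ∂ν) K := by
  refine LipschitzOnWith.of_dist_le' fun x hx x' hx' => ?_
  rw [dist_eq_norm, ← integral_sub (hFi x hx) (hFi x' hx'), ← integral_mul_const]
  refine norm_integral_le_of_norm_le (hℓ.mul_const _) (Eventually.of_forall fun y => ?_)
  rw [← dist_eq_norm]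
  exact (hF y).dist_le_mul x hx x' hx'

theorem ae_tendstoUniformlyOn_sampleMean [PseudoMetricSpace X] {K : Set X} (hK : IsCompact K)
    (hε : ∀ i, AEMeasurable (ε i) P) (hindep : Pairwise fun i j => IndepFun (ε i) (ε j) P)
    (hlaw : ∀ i, P.map (ε i) = ν) {F : X → E → ℝ} {ℓ : E → ℝ≥0}
    (hFm : ∀ x ∈ K, Measurable (F x)) (hFi : ∀ x ∈ K, Integrable (F x) ν)
    (hℓm : Measurable ℓ) (hℓi : Integrable (fun y => (ℓ y : ℝ)) ν)
    (hF : ∀ y, LipschitzOnWith (ℓ y) (F · y) K) :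
    ∀ᵐ ω ∂P, TendstoUniformlyOn (fun N x => sampleMean (F x) (ε · ω) N)
      (fun x => ∫ y, F x y ∂ν) atTop K := by
  obtain ⟨D, hDK, hDc, hKD⟩ := hK.isSeparable.exists_countable_dense_subset
  have hD : ∀ᵐ ω ∂P, ∀ x ∈ D, Tendsto (sampleMean (F x) (ε · ω)) atTop (𝓝 (∫ y, F x y ∂ν)) :=
    (ae_ball_iff hDc).2 fun x hx =>
      ae_tendsto_sampleMean hε hindep hlaw (hFm x (hDK hx)) (hFi x (hDK hx))
  filter_upwards [hD, ae_tendsto_sampleMean hε hindep hlaw hℓm.coe_nnreal_real hℓi]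
    with ω hωD hωℓ
  -- the Lipschitz constants of the sample means converge, hence are bounded
  obtain ⟨B, hB⟩ := hωℓ.bddAbove_range
  have hequi : EquicontinuousOn (fun N x => sampleMean (F x) (ε · ω) N) K :=
    (LipschitzOnWith.uniformEquicontinuousOn _ B.toNNReal fun N =>
      lipschitzOnWith_sampleMean hF _ N (hB ⟨N, rfl⟩)).equicontinuousOn
  exact hequi.tendstoUniformlyOn_of_dense hK
    (lipschitzOnWith_integral hF hFi hℓi).continuousOn hDK hKD hωD

end SampleMean

lemma stdGaussian_eq (q : ℕ) :
    _root_.stdGaussian q = ProbabilityTheory.stdGaussian (EuclideanSpace ℝ (Fin q)) :=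
  map_pi_eq_stdGaussian

instance (q : ℕ) : IsProbabilityMeasure (stdGaussian q) := by
  rw [stdGaussian_eq]
  infer_instance

lemma integrable_norm_stdGaussian (q : ℕ) : Integrable (‖·‖) (stdGaussian q) := by
  rw [stdGaussian_eq]
  exact IsGaussian.integrable_id.norm

theorem saa_convergence_mc_acqf_general
    {d q : ℕ} (K : Set (EuclideanSpace ℝ (Fin d))) (hK : IsCompact K) (hKne : K.Nonempty)
    (μ : EuclideanSpace ℝ (Fin d) → EuclideanSpace ℝ (Fin q))
    (Λ : EuclideanSpace ℝ (Fin d) →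
      (EuclideanSpace ℝ (Fin q) →L[ℝ] EuclideanSpace ℝ (Fin q)))
    (hμ : ContDiff ℝ 1 μ) (hΛ : ContDiff ℝ 1 Λ)
    (g : EuclideanSpace ℝ (Fin q) → EuclideanSpace ℝ (Fin q))
    (a : EuclideanSpace ℝ (Fin q) → ℝ)
    (Lg La : NNReal) (hg : LipschitzWith Lg g) (ha : LipschitzWith La a)
    (A : EuclideanSpace ℝ (Fin d) → EuclideanSpace ℝ (Fin q) → ℝ)
    (hA : ∀ x ε, A x ε = a (g (μ x + Λ x ε)))
    -- i.i.d. standard Gaussian base samples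
    {Ω : Type*} [MeasureSpace Ω]
    (ε : ℕ → Ω → EuclideanSpace ℝ (Fin q))
    (hεmeas : ∀ i, Measurable (ε i))
    (hindep : iIndepFun ε ℙ)
    (hgauss : ∀ i, Measure.map (ε i) ℙ = stdGaussian q)
    -- the true and sample-average acquisition functions
    (α : EuclideanSpace ℝ (Fin d) → ℝ)
    (hα : ∀ x, α x = ∫ e, A x e ∂(stdGaussian q))
    (αhat : ℕ → EuclideanSpace ℝ (Fin d) → Ω → ℝ)
    (hαhat : ∀ N x ω, αhat N x ω = (N : ℝ)⁻¹ * ∑ i ∈ Finset.range N, A x (ε i ω))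
    -- SAA maximizers over `K`
    (xhat : ℕ → Ω → EuclideanSpace ℝ (Fin d))
    (hxhatK : ∀ N ω, xhat N ω ∈ K)
    (hxhat : ∀ N ω, ∀ y ∈ K, αhat N y ω ≤ αhat N (xhat N ω) ω) :
    (∀ᵐ ω ∂ℙ, Tendsto (fun N => ⨆ x : K, αhat N x ω) atTop (𝓝 (⨆ x : K, α x))) ∧
    (∀ᵐ ω ∂ℙ, Tendsto
      (fun N => Metric.infDist (xhat N ω) {x ∈ K | ∀ y ∈ K, α y ≤ α x})
      atTop (𝓝 0)) := by
  have hmax : ∀ N ω, IsMaxOn (αhat N · ω) K (xhat N ω) := fun N ω => isMaxOn_iff.2 (hxhat N ω)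
  obtain rfl : A = fun x e => a (g (μ x + Λ x e)) := funext₂ hA
  obtain rfl : α = fun x => ∫ e, a (g (μ x + Λ x e)) ∂(stdGaussian q) := funext hα
  obtain rfl : αhat = fun N x ω => sampleMean (fun e => a (g (μ x + Λ x e))) (ε · ω) N :=
    funext₃ hαhat
  obtain ⟨Lμ, hLμ⟩ := hμ.locallyLipschitz.locallyLipschitzOn.exists_lipschitzOnWith_of_compact hK
  obtain ⟨LΛ, hLΛ⟩ := hΛ.locallyLipschitz.locallyLipschitzOn.exists_lipschitzOnWith_of_compact hK
  have hlipK : ∀ e, LipschitzOnWith (La * Lg * (Lμ + LΛ * ‖e‖₊))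
      (fun x => a (g (μ x + Λ x e))) K := fun e =>
    (ha.comp hg).comp_lipschitzOnWith (hLμ.add (hLΛ.clm_apply e))
  have hlipε := fun x => (ha.comp hg).comp ((LipschitzWith.const (μ x)).add (Λ x).lipschitz)
  have hint : ∀ x, Integrable (fun e => a (g (μ x + Λ x e))) (stdGaussian q) := fun x =>
    (hlipε x).integrable_of_integrable_norm (integrable_norm_stdGaussian q)
  have hℓ : Integrable (fun e => ((La * Lg * (Lμ + LΛ * ‖e‖₊) : ℝ≥0) : ℝ)) (stdGaussian q) := by
    push_cast
    exact ((integrable_const _).add ((integrable_norm_stdGaussian q).const_mul _)).const_mul _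
  have hunif := ae_tendstoUniformlyOn_sampleMean hK (fun i => (hεmeas i).aemeasurable)
    (fun i j hij => hindep.indepFun hij) hgauss
    (fun x _ => (hlipε x).continuous.measurable) (fun x _ => hint x) (by fun_prop) hℓ hlipK
  have hαcont := (lipschitzOnWith_integral hlipK (fun x _ => hint x) hℓ).continuousOn
  obtain ⟨x₀, hx₀K, hx₀⟩ := hK.exists_isMaxOn hKne hαcont
  constructor <;> filter_upwards [hunif] with ω hω
  · rw [hx₀.iSup_eq hx₀K]
    exact (hω.tendsto_apply_isMaxOn (hxhatK · ω) (hmax · ω) hx₀K hx₀).congr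
      fun N => ((hmax N ω).iSup_eq (hxhatK N ω)).symm
  · exact tendsto_infDist_setOf_isMaxOn hK hαcont (hxhatK · ω) hx₀
      (hω.tendsto_comp_isMaxOn (hxhatK · ω) (hmax · ω) hx₀K hx₀)

/-- **Theorem 1 (a.s. SAA convergence for MC acquisition functions).**
Let `𝕏 ⊂ ℝ^d` be compact, `h (x, ε) := μ x + Λ x ε` with `μ, Λ` continuously differentiable
(the reparameterized posterior of a GP with continuously differentiable mean and covariance),
and `A (x, ε) := a (g (h (x, ε)))` with `g, a` Lipschitz. If the base samples `ε¹, ε², …` are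
i.i.d. standard Gaussian `N(0, I_q)`, then (1) the SAA optimal values `α̂_N*` converge a.s.
to the true optimal value `α*`, and (2) `dist(x̂_N, 𝒳*) → 0` a.s. -/
theorem saa_convergence_mc_acqf
    {d q : ℕ} (K : Set (EuclideanSpace ℝ (Fin d))) (hK : IsCompact K) (hKne : K.Nonempty)
    (μ : EuclideanSpace ℝ (Fin d) → EuclideanSpace ℝ (Fin q))
    (Λ : EuclideanSpace ℝ (Fin d) →
      (EuclideanSpace ℝ (Fin q) →L[ℝ] EuclideanSpace ℝ (Fin q)))
    (hμ : ContDiff ℝ 1 μ) (hΛ : ContDiff ℝ 1 Λ)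
    (g : EuclideanSpace ℝ (Fin q) → EuclideanSpace ℝ (Fin q))
    (a : EuclideanSpace ℝ (Fin q) → ℝ)
    (Lg La : NNReal) (hg : LipschitzWith Lg g) (ha : LipschitzWith La a)
    (A : EuclideanSpace ℝ (Fin d) → EuclideanSpace ℝ (Fin q) → ℝ)
    (hA : ∀ x ε, A x ε = a (g (μ x + Λ x ε)))
    -- i.i.d. standard Gaussian base samples
    {Ω : Type*} [MeasureSpace Ω] [IsProbabilityMeasure (ℙ : Measure Ω)]
    (ε : ℕ → Ω → EuclideanSpace ℝ (Fin q))
    (hεmeas : ∀ i, Measurable (ε i))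
    (hindep : iIndepFun ε ℙ)
    (hgauss : ∀ i, Measure.map (ε i) ℙ = stdGaussian q)
    -- the true and sample-average acquisition functions
    (α : EuclideanSpace ℝ (Fin d) → ℝ)
    (hα : ∀ x, α x = ∫ e, A x e ∂(stdGaussian q))
    (αhat : ℕ → EuclideanSpace ℝ (Fin d) → Ω → ℝ)
    (hαhat : ∀ N x ω, αhat N x ω = (N : ℝ)⁻¹ * ∑ i ∈ Finset.range N, A x (ε i ω))
    -- SAA maximizers over `K`
    (xhat : ℕ → Ω → EuclideanSpace ℝ (Fin d))
    (hxhatK : ∀ N ω, xhat N ω ∈ K)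
    (hxhat : ∀ N ω, ∀ y ∈ K, αhat N y ω ≤ αhat N (xhat N ω) ω) :
    (∀ᵐ ω ∂ℙ, Tendsto (fun N => ⨆ x : K, αhat N x ω) atTop (𝓝 (⨆ x : K, α x))) ∧
    (∀ᵐ ω ∂ℙ, Tendsto
      (fun N => Metric.infDist (xhat N ω) {x ∈ K | ∀ y ∈ K, α y ≤ α x})
      atTop (𝓝 0)) :=
  saa_convergence_mc_acqf_general K hK hKne μ Λ hμ hΛ g a Lg La hg ha A hA ε hεmeas hindep hgauss α
    hα αhat hαhat xhat hxhatK hxhat
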